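/- Let θ ∈ [−1,1] and let (X,Y) have law μ_θ. Then the squared distance covariance of X and Y equals dCov²(X,Y) = θ²/225. -/

import Mathlib

open MeasureTheory ProbabilityTheory
open intervalIntegral Set
open scoped NNReal ENNReal

/-- The Farlie–Gumbel–Morgenstern measure on `[0,1]²`: the measure with density
`c_θ(x,y) = 1 + θ(2x−1)(2y−1)` with respect to Lebesgue measure on `[0,1]²`. -/
noncomputable def fgmMeasure (θ : ℝ) : Measure (ℝ × ℝ) :=
  (volume.restrict (Set.Icc (0 : ℝ) 1 ×ˢ Set.Icc (0 : ℝ) 1)).withDensity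
    (fun p => ENNReal.ofReal (1 + θ * (2 * p.1 - 1) * (2 * p.2 - 1)))

/-- The squared distance covariance of the pair `(X,Y)`, expressed through three
independent copies `Z 0, Z 1, Z 2` of `(X,Y)`:
`dCov²(X,Y) = E[|X₁−X₂|·|Y₁−Y₂|] + E[|X₁−X₂|]·E[|Y₁−Y₂|] − 2·E[|X₁−X₂|·|Y₁−Y₃|]`. -/
noncomputable def dCov2 {Ω : Type*} [MeasurableSpace Ω] (μ : Measure Ω)
    (Z : Fin 3 → Ω → ℝ × ℝ) : ℝ :=
  (∫ ω, |(Z 0 ω).1 - (Z 1 ω).1| * |(Z 0 ω).2 - (Z 1 ω).2| ∂μ)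
    + (∫ ω, |(Z 0 ω).1 - (Z 1 ω).1| ∂μ) * (∫ ω, |(Z 0 ω).2 - (Z 1 ω).2| ∂μ)
    - 2 * ∫ ω, |(Z 0 ω).1 - (Z 1 ω).1| * |(Z 0 ω).2 - (Z 2 ω).2| ∂μ

lemma integral_poly (a5 a4 a3 a2 a1 a0 s t : ℝ) :
    ∫ u in s..t, (a5*u^5 + a4*u^4 + a3*u^3 + a2*u^2 + a1*u + a0) =
      (a5*t^6/6 + a4*t^5/5 + a3*t^4/4 + a2*t^3/3 + a1*t^2/2 + a0*t)
        - (a5*s^6/6 + a4*s^5/5 + a3*s^4/4 + a2*s^3/3 + a1*s^2/2 + a0*s) := by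
  have h : ∀ u : ℝ, HasDerivAt (fun u : ℝ => a5*u^6/6 + a4*u^5/5 + a3*u^4/4 + a2*u^3/3 + a1*u^2/2 + a0*u)
      (a5*u^5 + a4*u^4 + a3*u^3 + a2*u^2 + a1*u + a0) u := by
    intro u
    have h6 := ((hasDerivAt_pow 6 u).const_mul (a5/6))
    have h5 := ((hasDerivAt_pow 5 u).const_mul (a4/5))
    have h4 := ((hasDerivAt_pow 4 u).const_mul (a3/4))
    have h3 := ((hasDerivAt_pow 3 u).const_mul (a2/3))
    have h2 := ((hasDerivAt_pow 2 u).const_mul (a1/2))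
    have h1 := (hasDerivAt_id u).const_mul a0
    have := ((((h6.add h5).add h4).add h3).add h2).add h1
    exact (this.congr_deriv (by simp only [Nat.cast_ofNat, Nat.reduceSub]; ring)).congr_of_eventuallyEq
      (Filter.Eventually.of_forall fun y => by simp only [Pi.add_apply, id_eq]; ring)
  rw [intervalIntegral.integral_eq_sub_of_hasDerivAt (fun u _ => h u)
    ((by continuity : Continuous fun u : ℝ => a5*u^5 + a4*u^4 + a3*u^3 + a2*u^2 + a1*u + a0).intervalIntegrable _ _)]

lemma absLin (x a b : ℝ) (hx0 : 0 ≤ x) (hx1 : x ≤ 1) :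
    ∫ u in (0:ℝ)..1, |x - u| * (a*u + b) =
      a*x^3/3 + b*x^2 - a*x/2 - b*x + a/3 + b/2 := by
  have hc : ∀ s t : ℝ, IntervalIntegrable (fun u => |x - u| * (a*u + b)) volume s t := by
    intro s t
    exact ((continuous_const.sub continuous_id).abs.mul (by continuity)).intervalIntegrable _ _
  rw [← intervalIntegral.integral_add_adjacent_intervals (a := 0) (b := x) (c := 1) (hc 0 x) (hc x 1)]
  have e1 : ∫ u in (0:ℝ)..x, |x - u| * (a*u + b)
      = ∫ u in (0:ℝ)..x, (0*u^5 + 0*u^4 + 0*u^3 + (-a)*u^2 + (a*x - b)*u + b*x) := by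
    apply intervalIntegral.integral_congr
    intro u hu
    rw [Set.uIcc_of_le hx0] at hu
    have : |x - u| = x - u := abs_of_nonneg (by linarith [hu.2])
    show |x - u| * (a * u + b) = _; rw [this]; ring
  have e2 : ∫ u in x..(1:ℝ), |x - u| * (a*u + b)
      = ∫ u in x..(1:ℝ), (0*u^5 + 0*u^4 + 0*u^3 + a*u^2 + (b - a*x)*u + (-b)*x) := by
    apply intervalIntegral.integral_congr
    intro u hu
    rw [Set.uIcc_of_le hx1] at hu
    have : |x - u| = u - x := by rw [abs_sub_comm]; exact abs_of_nonneg (by linarith [hu.1])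
    show |x - u| * (a * u + b) = _; rw [this]; ring
  rw [e1, e2, integral_poly, integral_poly]; ring

lemma fgm_density_nonneg {θ : ℝ} (hθ : θ ∈ Set.Icc (-1:ℝ) 1) {p : ℝ × ℝ}
    (hp : p ∈ Set.Icc (0:ℝ) 1 ×ˢ Set.Icc (0:ℝ) 1) :
    0 ≤ 1 + θ * (2 * p.1 - 1) * (2 * p.2 - 1) := by
  obtain ⟨⟨h1, h2⟩, h3, h4⟩ := hp
  obtain ⟨ht1, ht2⟩ := hθ
  have hta : |θ| ≤ 1 := abs_le.2 ⟨ht1, ht2⟩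
  have hxa : |2 * p.1 - 1| ≤ 1 := abs_le.2 ⟨by linarith, by linarith⟩
  have hya : |2 * p.2 - 1| ≤ 1 := abs_le.2 ⟨by linarith, by linarith⟩
  have h : |θ * (2 * p.1 - 1) * (2 * p.2 - 1)| ≤ 1 := by
    rw [abs_mul, abs_mul]
    exact mul_le_one₀ (mul_le_one₀ hta (abs_nonneg _) hxa) (abs_nonneg _) hya
  linarith [neg_abs_le (θ * (2 * p.1 - 1) * (2 * p.2 - 1))]

lemma fgm_integral {θ : ℝ} (hθ : θ ∈ Set.Icc (-1:ℝ) 1) (f : ℝ × ℝ → ℝ) (hf : Continuous f) :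
    ∫ p, f p ∂(fgmMeasure θ) =
      ∫ x in (0:ℝ)..1, ∫ y in (0:ℝ)..1, (1 + θ*(2*x-1)*(2*y-1)) * f (x, y) := by
  have hcc : Continuous fun p : ℝ × ℝ => 1 + θ * (2 * p.1 - 1) * (2 * p.2 - 1) := by continuity
  have hmS : MeasurableSet (Set.Icc (0:ℝ) 1 ×ˢ Set.Icc (0:ℝ) 1) :=
    (measurableSet_Icc).prod measurableSet_Icc
  have h1 : ∫ p, f p ∂(fgmMeasure θ)
      = ∫ p in Set.Icc (0:ℝ) 1 ×ˢ Set.Icc (0:ℝ) 1,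
          (1 + θ * (2 * p.1 - 1) * (2 * p.2 - 1)) * f p ∂volume := by
    rw [fgmMeasure]
    have hm : Measurable fun p : ℝ × ℝ =>
        Real.toNNReal (1 + θ * (2 * p.1 - 1) * (2 * p.2 - 1)) :=
      measurable_real_toNNReal.comp hcc.measurable
    rw [show (fun p : ℝ × ℝ => ENNReal.ofReal (1 + θ * (2 * p.1 - 1) * (2 * p.2 - 1)))
        = fun p : ℝ × ℝ => ((Real.toNNReal (1 + θ * (2 * p.1 - 1) * (2 * p.2 - 1)) : ℝ≥0) : ℝ≥0∞)
      from rfl]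
    rw [integral_withDensity_eq_integral_smul hm f]
    refine setIntegral_congr_fun hmS fun p hp => ?_
    rw [NNReal.smul_def, Real.coe_toNNReal _ (fgm_density_nonneg hθ hp), smul_eq_mul]
  rw [h1]
  have hprod : volume.restrict (Set.Icc (0:ℝ) 1 ×ˢ Set.Icc (0:ℝ) 1)
      = (volume.restrict (Set.Icc (0:ℝ) 1)).prod (volume.restrict (Set.Icc (0:ℝ) 1)) := by
    rw [Measure.volume_eq_prod, Measure.prod_restrict]
  have hint : Integrable (fun p : ℝ × ℝ => (1 + θ * (2 * p.1 - 1) * (2 * p.2 - 1)) * f p)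
      ((volume.restrict (Set.Icc (0:ℝ) 1)).prod (volume.restrict (Set.Icc (0:ℝ) 1))) := by
    rw [← hprod]
    exact ((hcc.mul hf).continuousOn).integrableOn_compact (isCompact_Icc.prod isCompact_Icc)
  calc ∫ p in Set.Icc (0:ℝ) 1 ×ˢ Set.Icc (0:ℝ) 1,
          (1 + θ * (2 * p.1 - 1) * (2 * p.2 - 1)) * f p ∂volume
      = ∫ p, (1 + θ * (2 * p.1 - 1) * (2 * p.2 - 1)) * f p
          ∂((volume.restrict (Set.Icc (0:ℝ) 1)).prod (volume.restrict (Set.Icc (0:ℝ) 1))) := by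
        rw [← hprod]
    _ = ∫ x in Set.Icc (0:ℝ) 1, ∫ y in Set.Icc (0:ℝ) 1,
          (1 + θ * (2 * x - 1) * (2 * y - 1)) * f (x, y) ∂volume ∂volume := by
        rw [integral_prod _ hint]
    _ = ∫ x in (0:ℝ)..1, ∫ y in (0:ℝ)..1, (1 + θ*(2*x-1)*(2*y-1)) * f (x, y) := by
        rw [intervalIntegral.integral_of_le (by norm_num : (0:ℝ) ≤ 1),
          ← integral_Icc_eq_integral_Ioc]
        refine setIntegral_congr_fun measurableSet_Icc fun x hx => ?_
        rw [intervalIntegral.integral_of_le (by norm_num : (0:ℝ) ≤ 1),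
          ← integral_Icc_eq_integral_Ioc]

lemma fgm_inner_poly (u c3 c2 c1 c0 : ℝ) :
    (∫ y in (0:ℝ)..1, (1 + u*(2*y-1)) * (c3*y^3 + c2*y^2 + c1*y + c0)) =
      (c3/4 + c2/3 + c1/2 + c0) + u*(3*c3/20 + c2/6 + c1/6) := by
  rw [show (fun y : ℝ => (1 + u*(2*y-1)) * (c3*y^3 + c2*y^2 + c1*y + c0))
      = fun y : ℝ => 0*y^5 + (2*u*c3)*y^4 + (2*u*c2 + c3 - u*c3)*y^3 + (2*u*c1 + c2 - u*c2)*y^2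
        + (2*u*c0 + c1 - u*c1)*y + (c0 - u*c0) from funext fun y => by ring, integral_poly]
  ring

-- ∫ |t - q.1| dν = t² - t + 1/2  for t ∈ [0,1]
lemma fgm_abs_fst {θ : ℝ} (hθ : θ ∈ Set.Icc (-1:ℝ) 1) {t : ℝ} (ht0 : 0 ≤ t) (ht1 : t ≤ 1) :
    ∫ q, |t - q.1| ∂(fgmMeasure θ) = t^2 - t + 1/2 := by
  rw [fgm_integral hθ (fun q => |t - q.1|) (by continuity)]
  have hx : ∀ x : ℝ, (∫ y in (0:ℝ)..1, (1 + θ*(2*x-1)*(2*y-1)) * |t - (x, y).1|) = |t - x| := by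
    intro x
    rw [show (fun y : ℝ => (1 + θ*(2*x-1)*(2*y-1)) * |t - (x, y).1|)
        = fun y : ℝ => (1 + (θ*(2*x-1))*(2*y-1)) * (0*y^3 + 0*y^2 + 0*y + |t - x|)
      from funext fun y => by ring, fgm_inner_poly]
    ring
  simp only [hx]
  rw [show (fun x : ℝ => |t - x|) = fun x : ℝ => |t - x| * (0*x + 1)
    from funext fun x => by ring, absLin t 0 1 ht0 ht1]
  ring

-- ∫ |t - q.2| dν = t² - t + 1/2  for t ∈ [0,1]
lemma fgm_abs_snd {θ : ℝ} (hθ : θ ∈ Set.Icc (-1:ℝ) 1) {t : ℝ} (ht0 : 0 ≤ t) (ht1 : t ≤ 1) :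
    ∫ q, |t - q.2| ∂(fgmMeasure θ) = t^2 - t + 1/2 := by
  rw [fgm_integral hθ (fun q => |t - q.2|) (by continuity)]
  have hx : ∀ x : ℝ, (∫ y in (0:ℝ)..1, (1 + θ*(2*x-1)*(2*y-1)) * |t - (x, y).2|)
      = (t^2 - t + 1/2) + θ*(2*x-1)*(2*t^3/3 - t^2 + 1/6) := by
    intro x
    rw [show (fun y : ℝ => (1 + θ*(2*x-1)*(2*y-1)) * |t - (x, y).2|)
        = fun y : ℝ => |t - y| * ((2*θ*(2*x-1))*y + (1 - θ*(2*x-1)))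
      from funext fun y => by ring, absLin t _ _ ht0 ht1]
    ring
  simp only [hx]
  rw [show (fun x : ℝ => (t^2 - t + 1/2) + θ*(2*x-1)*(2*t^3/3 - t^2 + 1/6))
      = fun x : ℝ => 0*x^5 + 0*x^4 + 0*x^3 + 0*x^2 + (2*θ*(2*t^3/3 - t^2 + 1/6))*x
          + ((t^2 - t + 1/2) - θ*(2*t^3/3 - t^2 + 1/6))
    from funext fun x => by ring, integral_poly]
  ring

-- inner integral for the T1 term
lemma fgm_T1inner {θ : ℝ} (hθ : θ ∈ Set.Icc (-1:ℝ) 1) {p1 p2 : ℝ}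
    (h10 : 0 ≤ p1) (h11 : p1 ≤ 1) (h20 : 0 ≤ p2) (h21 : p2 ≤ 1) :
    ∫ q, |p1 - q.1| * |p2 - q.2| ∂(fgmMeasure θ) =
      (p1^2 - p1 + 1/2) * (p2^2 - p2 + 1/2)
        + θ * (2*p1^3/3 - p1^2 + 1/6) * (2*p2^3/3 - p2^2 + 1/6) := by
  rw [fgm_integral hθ (fun q => |p1 - q.1| * |p2 - q.2|) (by continuity)]
  have hx : ∀ x : ℝ,
      (∫ y in (0:ℝ)..1, (1 + θ*(2*x-1)*(2*y-1)) * (|p1 - (x, y).1| * |p2 - (x, y).2|))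
      = |p1 - x| * ((2*θ*(2*p2^3/3 - p2^2 + 1/6))*x
          + ((p2^2 - p2 + 1/2) - θ*(2*p2^3/3 - p2^2 + 1/6))) := by
    intro x
    rw [show (fun y : ℝ => (1 + θ*(2*x-1)*(2*y-1)) * (|p1 - (x, y).1| * |p2 - (x, y).2|))
        = fun y : ℝ => |p2 - y| * ((2*θ*(2*x-1)*|p1 - x|)*y + ((1 - θ*(2*x-1))*|p1 - x|))
      from funext fun y => by ring, absLin p2 _ _ h20 h21]
    ring
  simp only [hx]
  rw [absLin p1 _ _ h10 h11]
  ring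

-- outer integrals against ν
lemma fgm_out_L1fst {θ : ℝ} (hθ : θ ∈ Set.Icc (-1:ℝ) 1) :
    ∫ p, (p.1^2 - p.1 + 1/2) ∂(fgmMeasure θ) = 1/3 := by
  rw [fgm_integral hθ (fun p => p.1^2 - p.1 + 1/2) (by continuity)]
  have hx : ∀ x : ℝ, (∫ y in (0:ℝ)..1, (1 + θ*(2*x-1)*(2*y-1)) * ((x, y).1^2 - (x, y).1 + 1/2))
      = x^2 - x + 1/2 := by
    intro x
    rw [show (fun y : ℝ => (1 + θ*(2*x-1)*(2*y-1)) * ((x, y).1^2 - (x, y).1 + 1/2))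
        = fun y : ℝ => (1 + (θ*(2*x-1))*(2*y-1)) * (0*y^3 + 0*y^2 + 0*y + (x^2 - x + 1/2))
      from funext fun y => by ring, fgm_inner_poly]
    ring
  simp only [hx]
  rw [show (fun x : ℝ => x^2 - x + 1/2)
      = fun x : ℝ => 0*x^5 + 0*x^4 + 0*x^3 + 1*x^2 + (-1)*x + 1/2
    from funext fun x => by ring, integral_poly]
  norm_num

lemma fgm_out_L1snd {θ : ℝ} (hθ : θ ∈ Set.Icc (-1:ℝ) 1) :
    ∫ p, (p.2^2 - p.2 + 1/2) ∂(fgmMeasure θ) = 1/3 := by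
  rw [fgm_integral hθ (fun p => p.2^2 - p.2 + 1/2) (by continuity)]
  have hx : ∀ x : ℝ, (∫ y in (0:ℝ)..1, (1 + θ*(2*x-1)*(2*y-1)) * ((x, y).2^2 - (x, y).2 + 1/2))
      = 1/3 := by
    intro x
    rw [show (fun y : ℝ => (1 + θ*(2*x-1)*(2*y-1)) * ((x, y).2^2 - (x, y).2 + 1/2))
        = fun y : ℝ => (1 + (θ*(2*x-1))*(2*y-1)) * (0*y^3 + 1*y^2 + (-1)*y + 1/2)
      from funext fun y => by ring, fgm_inner_poly]
    ring
  simp only [hx]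
  rw [show (fun _ : ℝ => (1:ℝ)/3)
      = fun x : ℝ => 0*x^5 + 0*x^4 + 0*x^3 + 0*x^2 + 0*x + 1/3
    from funext fun x => by ring, integral_poly]
  norm_num

lemma fgm_out_L1L1 {θ : ℝ} (hθ : θ ∈ Set.Icc (-1:ℝ) 1) :
    ∫ p, ((p.1^2 - p.1 + 1/2) * (p.2^2 - p.2 + 1/2)) ∂(fgmMeasure θ) = 1/9 := by
  rw [fgm_integral hθ (fun p => (p.1^2 - p.1 + 1/2) * (p.2^2 - p.2 + 1/2)) (by continuity)]
  have hx : ∀ x : ℝ, (∫ y in (0:ℝ)..1,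
      (1 + θ*(2*x-1)*(2*y-1)) * (((x, y).1^2 - (x, y).1 + 1/2) * ((x, y).2^2 - (x, y).2 + 1/2)))
      = (x^2 - x + 1/2)/3 := by
    intro x
    rw [show (fun y : ℝ => (1 + θ*(2*x-1)*(2*y-1))
          * (((x, y).1^2 - (x, y).1 + 1/2) * ((x, y).2^2 - (x, y).2 + 1/2)))
        = fun y : ℝ => (1 + (θ*(2*x-1))*(2*y-1)) * (0*y^3 + (x^2 - x + 1/2)*y^2
            + (-(x^2 - x + 1/2))*y + (x^2 - x + 1/2)/2)
      from funext fun y => by ring, fgm_inner_poly]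
    ring
  simp only [hx]
  rw [show (fun x : ℝ => (x^2 - x + 1/2)/3)
      = fun x : ℝ => 0*x^5 + 0*x^4 + 0*x^3 + (1/3)*x^2 + (-(1/3))*x + 1/6
    from funext fun x => by ring, integral_poly]
  norm_num

lemma fgm_out_T1 {θ : ℝ} (hθ : θ ∈ Set.Icc (-1:ℝ) 1) :
    ∫ p, ((p.1^2 - p.1 + 1/2) * (p.2^2 - p.2 + 1/2)
        + θ * (2*p.1^3/3 - p.1^2 + 1/6) * (2*p.2^3/3 - p.2^2 + 1/6)) ∂(fgmMeasure θ)
      = 1/9 + θ^2/225 := by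
  rw [fgm_integral hθ (fun p => (p.1^2 - p.1 + 1/2) * (p.2^2 - p.2 + 1/2)
    + θ * (2*p.1^3/3 - p.1^2 + 1/6) * (2*p.2^3/3 - p.2^2 + 1/6)) (by continuity)]
  have hx : ∀ x : ℝ, (∫ y in (0:ℝ)..1,
      (1 + θ*(2*x-1)*(2*y-1)) * (((x, y).1^2 - (x, y).1 + 1/2) * ((x, y).2^2 - (x, y).2 + 1/2)
        + θ * (2*(x, y).1^3/3 - (x, y).1^2 + 1/6) * (2*(x, y).2^3/3 - (x, y).2^2 + 1/6)))
      = (x^2 - x + 1/2)/3 - (θ^2/15)*(2*x-1)*(2*x^3/3 - x^2 + 1/6) := by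
    intro x
    rw [show (fun y : ℝ => (1 + θ*(2*x-1)*(2*y-1))
          * (((x, y).1^2 - (x, y).1 + 1/2) * ((x, y).2^2 - (x, y).2 + 1/2)
            + θ * (2*(x, y).1^3/3 - (x, y).1^2 + 1/6) * (2*(x, y).2^3/3 - (x, y).2^2 + 1/6)))
        = fun y : ℝ => (1 + (θ*(2*x-1))*(2*y-1))
            * ((θ*(2*x^3/3 - x^2 + 1/6)*(2/3))*y^3
              + ((x^2 - x + 1/2) - θ*(2*x^3/3 - x^2 + 1/6))*y^2
              + (-(x^2 - x + 1/2))*y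
              + ((x^2 - x + 1/2)/2 + θ*(2*x^3/3 - x^2 + 1/6)/6))
      from funext fun y => by ring, fgm_inner_poly]
    ring
  simp only [hx]
  rw [show (fun x : ℝ => (x^2 - x + 1/2)/3 - (θ^2/15)*(2*x-1)*(2*x^3/3 - x^2 + 1/6))
      = fun x : ℝ => 0*x^5 + (-(4/45)*θ^2)*x^4 + ((8/45)*θ^2)*x^3 + (1/3 - θ^2/15)*x^2
          + (-(1/3) - θ^2/45)*x + (1/6 + θ^2/90)
    from funext fun x => by ring, integral_poly]
  ring

lemma fgm_ae_mem (θ : ℝ) :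
    ∀ᵐ p ∂(fgmMeasure θ), p ∈ Set.Icc (0:ℝ) 1 ×ˢ Set.Icc (0:ℝ) 1 := by
  have h : fgmMeasure θ ≪ volume.restrict (Set.Icc (0:ℝ) 1 ×ˢ Set.Icc (0:ℝ) 1) :=
    withDensity_absolutelyContinuous _ _
  exact (ae_restrict_mem (measurableSet_Icc.prod measurableSet_Icc)).filter_mono h.ae_le

lemma fgm_S_one (θ : ℝ) [IsProbabilityMeasure (fgmMeasure θ)] :
    fgmMeasure θ (Set.Icc (0:ℝ) 1 ×ˢ Set.Icc (0:ℝ) 1) = 1 := by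
  rw [← prob_compl_eq_zero_iff (measurableSet_Icc.prod measurableSet_Icc)]
  exact ae_iff.mp (fgm_ae_mem θ)

lemma fgm_prod_ae_mem (θ : ℝ) [IsProbabilityMeasure (fgmMeasure θ)] :
    ∀ᵐ z ∂((fgmMeasure θ).prod (fgmMeasure θ)),
      z ∈ (Set.Icc (0:ℝ) 1 ×ˢ Set.Icc (0:ℝ) 1) ×ˢ (Set.Icc (0:ℝ) 1 ×ˢ Set.Icc (0:ℝ) 1) := by
  refine ae_iff.2 ?_
  have h1 : ((fgmMeasure θ).prod (fgmMeasure θ))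
      ((Set.Icc (0:ℝ) 1 ×ˢ Set.Icc (0:ℝ) 1) ×ˢ (Set.Icc (0:ℝ) 1 ×ˢ Set.Icc (0:ℝ) 1)) = 1 := by
    rw [Measure.prod_prod, fgm_S_one, one_mul]
  have := prob_compl_eq_zero_iff
    ((measurableSet_Icc.prod measurableSet_Icc).prod
      (measurableSet_Icc.prod measurableSet_Icc)) |>.2 h1
  simpa [Set.compl_def] using this

lemma fgm_triple_ae_mem (θ : ℝ) [IsProbabilityMeasure (fgmMeasure θ)] :
    ∀ᵐ z ∂((fgmMeasure θ).prod ((fgmMeasure θ).prod (fgmMeasure θ))),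
      z ∈ (Set.Icc (0:ℝ) 1 ×ˢ Set.Icc (0:ℝ) 1)
        ×ˢ ((Set.Icc (0:ℝ) 1 ×ˢ Set.Icc (0:ℝ) 1) ×ˢ (Set.Icc (0:ℝ) 1 ×ˢ Set.Icc (0:ℝ) 1)) := by
  refine ae_iff.2 ?_
  have h1 : ((fgmMeasure θ).prod ((fgmMeasure θ).prod (fgmMeasure θ)))
      ((Set.Icc (0:ℝ) 1 ×ˢ Set.Icc (0:ℝ) 1)
        ×ˢ ((Set.Icc (0:ℝ) 1 ×ˢ Set.Icc (0:ℝ) 1) ×ˢ (Set.Icc (0:ℝ) 1 ×ˢ Set.Icc (0:ℝ) 1))) = 1 := by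
    rw [Measure.prod_prod, Measure.prod_prod, fgm_S_one, one_mul, one_mul]
  have := prob_compl_eq_zero_iff
    ((measurableSet_Icc.prod measurableSet_Icc).prod
      ((measurableSet_Icc.prod measurableSet_Icc).prod
        (measurableSet_Icc.prod measurableSet_Icc))) |>.2 h1
  simpa [Set.compl_def] using this

lemma term1_eval {θ : ℝ} (hθ : θ ∈ Set.Icc (-1:ℝ) 1) [IsProbabilityMeasure (fgmMeasure θ)] :
    ∫ z : (ℝ × ℝ) × (ℝ × ℝ), |z.1.1 - z.2.1| * |z.1.2 - z.2.2|
        ∂((fgmMeasure θ).prod (fgmMeasure θ)) = 1/9 + θ^2/225 := by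
  have hF : Continuous fun z : (ℝ × ℝ) × (ℝ × ℝ) => |z.1.1 - z.2.1| * |z.1.2 - z.2.2| := by fun_prop
  have hint : Integrable (fun z : (ℝ × ℝ) × (ℝ × ℝ) => |z.1.1 - z.2.1| * |z.1.2 - z.2.2|)
      ((fgmMeasure θ).prod (fgmMeasure θ)) := by
    refine Integrable.mono' (integrable_const 1) hF.aestronglyMeasurable ?_
    filter_upwards [fgm_prod_ae_mem θ] with z hz
    obtain ⟨⟨⟨a0, a1⟩, b0, b1⟩, ⟨c0, c1⟩, d0, d1⟩ := hz
    rw [Real.norm_eq_abs, abs_mul, abs_abs, abs_abs]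
    exact mul_le_one₀ (abs_le.2 ⟨by linarith, by linarith⟩) (abs_nonneg _)
      (abs_le.2 ⟨by linarith, by linarith⟩)
  rw [integral_prod _ hint]
  refine Eq.trans (integral_congr_ae ?_) (fgm_out_T1 hθ)
  filter_upwards [fgm_ae_mem θ] with p hp
  exact fgm_T1inner hθ hp.1.1 hp.1.2 hp.2.1 hp.2.2

lemma term2a_eval {θ : ℝ} (hθ : θ ∈ Set.Icc (-1:ℝ) 1) [IsProbabilityMeasure (fgmMeasure θ)] :
    ∫ z : (ℝ × ℝ) × (ℝ × ℝ), |z.1.1 - z.2.1|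
        ∂((fgmMeasure θ).prod (fgmMeasure θ)) = 1/3 := by
  have hF : Continuous fun z : (ℝ × ℝ) × (ℝ × ℝ) => |z.1.1 - z.2.1| := by fun_prop
  have hint : Integrable (fun z : (ℝ × ℝ) × (ℝ × ℝ) => |z.1.1 - z.2.1|)
      ((fgmMeasure θ).prod (fgmMeasure θ)) := by
    refine Integrable.mono' (integrable_const 1) hF.aestronglyMeasurable ?_
    filter_upwards [fgm_prod_ae_mem θ] with z hz
    obtain ⟨⟨⟨a0, a1⟩, _, _⟩, ⟨c0, c1⟩, _, _⟩ := hz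
    rw [Real.norm_eq_abs, abs_abs]
    exact abs_le.2 ⟨by linarith, by linarith⟩
  rw [integral_prod _ hint]
  refine Eq.trans (integral_congr_ae ?_) (fgm_out_L1fst hθ)
  filter_upwards [fgm_ae_mem θ] with p hp
  exact fgm_abs_fst hθ hp.1.1 hp.1.2

lemma term2b_eval {θ : ℝ} (hθ : θ ∈ Set.Icc (-1:ℝ) 1) [IsProbabilityMeasure (fgmMeasure θ)] :
    ∫ z : (ℝ × ℝ) × (ℝ × ℝ), |z.1.2 - z.2.2|
        ∂((fgmMeasure θ).prod (fgmMeasure θ)) = 1/3 := by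
  have hF : Continuous fun z : (ℝ × ℝ) × (ℝ × ℝ) => |z.1.2 - z.2.2| := by fun_prop
  have hint : Integrable (fun z : (ℝ × ℝ) × (ℝ × ℝ) => |z.1.2 - z.2.2|)
      ((fgmMeasure θ).prod (fgmMeasure θ)) := by
    refine Integrable.mono' (integrable_const 1) hF.aestronglyMeasurable ?_
    filter_upwards [fgm_prod_ae_mem θ] with z hz
    obtain ⟨⟨⟨_, _⟩, b0, b1⟩, ⟨_, _⟩, d0, d1⟩ := hz
    rw [Real.norm_eq_abs, abs_abs]
    exact abs_le.2 ⟨by linarith, by linarith⟩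
  rw [integral_prod _ hint]
  refine Eq.trans (integral_congr_ae ?_) (fgm_out_L1snd hθ)
  filter_upwards [fgm_ae_mem θ] with p hp
  exact fgm_abs_snd hθ hp.2.1 hp.2.2

lemma term3_eval {θ : ℝ} (hθ : θ ∈ Set.Icc (-1:ℝ) 1) [IsProbabilityMeasure (fgmMeasure θ)] :
    ∫ z : (ℝ × ℝ) × ((ℝ × ℝ) × (ℝ × ℝ)), |z.1.1 - z.2.1.1| * |z.1.2 - z.2.2.2|
        ∂((fgmMeasure θ).prod ((fgmMeasure θ).prod (fgmMeasure θ))) = 1/9 := by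
  have hF : Continuous fun z : (ℝ × ℝ) × ((ℝ × ℝ) × (ℝ × ℝ)) =>
      |z.1.1 - z.2.1.1| * |z.1.2 - z.2.2.2| := by fun_prop
  have hint : Integrable (fun z : (ℝ × ℝ) × ((ℝ × ℝ) × (ℝ × ℝ)) =>
      |z.1.1 - z.2.1.1| * |z.1.2 - z.2.2.2|)
      ((fgmMeasure θ).prod ((fgmMeasure θ).prod (fgmMeasure θ))) := by
    refine Integrable.mono' (integrable_const 1) hF.aestronglyMeasurable ?_
    filter_upwards [fgm_triple_ae_mem θ] with z hz
    obtain ⟨⟨⟨a0, a1⟩, b0, b1⟩, ⟨⟨c0, c1⟩, _, _⟩, _, d0, d1⟩ := hz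
    rw [Real.norm_eq_abs, abs_mul, abs_abs, abs_abs]
    exact mul_le_one₀ (abs_le.2 ⟨by linarith, by linarith⟩) (abs_nonneg _)
      (abs_le.2 ⟨by linarith, by linarith⟩)
  rw [integral_prod _ hint]
  refine Eq.trans (integral_congr_ae ?_) (fgm_out_L1L1 hθ)
  filter_upwards [fgm_ae_mem θ] with p hp
  have hinner : Integrable (fun w : (ℝ × ℝ) × (ℝ × ℝ) => |p.1 - w.1.1| * |p.2 - w.2.2|)
      ((fgmMeasure θ).prod (fgmMeasure θ)) := by
    refine Integrable.mono' (integrable_const 1) (by fun_prop : Continuous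
      fun w : (ℝ × ℝ) × (ℝ × ℝ) => |p.1 - w.1.1| * |p.2 - w.2.2|).aestronglyMeasurable ?_
    filter_upwards [fgm_prod_ae_mem θ] with w hw
    obtain ⟨⟨⟨a0, a1⟩, _, _⟩, _, d0, d1⟩ := hw
    obtain ⟨⟨e0, e1⟩, f0, f1⟩ := hp
    rw [Real.norm_eq_abs, abs_mul, abs_abs, abs_abs]
    exact mul_le_one₀ (abs_le.2 ⟨by linarith, by linarith⟩) (abs_nonneg _)
      (abs_le.2 ⟨by linarith, by linarith⟩)
  calc ∫ w : (ℝ × ℝ) × (ℝ × ℝ), |p.1 - w.1.1| * |p.2 - w.2.2|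
        ∂((fgmMeasure θ).prod (fgmMeasure θ))
      = ∫ q1 : ℝ × ℝ, ∫ q2 : ℝ × ℝ, |p.1 - q1.1| * |p.2 - q2.2|
          ∂(fgmMeasure θ) ∂(fgmMeasure θ) := integral_prod _ hinner
    _ = ∫ q1 : ℝ × ℝ, |p.1 - q1.1| * (p.2^2 - p.2 + 1/2) ∂(fgmMeasure θ) := by
        refine integral_congr_ae (Filter.Eventually.of_forall fun q1 => ?_)
        show (∫ q2 : ℝ × ℝ, |p.1 - q1.1| * |p.2 - q2.2| ∂(fgmMeasure θ)) = _
        rw [MeasureTheory.integral_const_mul, fgm_abs_snd hθ hp.2.1 hp.2.2]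
    _ = (∫ q1 : ℝ × ℝ, |p.1 - q1.1| ∂(fgmMeasure θ)) * (p.2^2 - p.2 + 1/2) :=
        integral_mul_const _ _
    _ = (p.1^2 - p.1 + 1/2) * (p.2^2 - p.2 + 1/2) := by
        rw [fgm_abs_fst hθ hp.1.1 hp.1.2]

theorem fgm_squared_distance_covariance
    {Ω : Type*} [MeasurableSpace Ω] (μ : Measure Ω) [IsProbabilityMeasure μ]
    (θ : ℝ) (hθ : θ ∈ Set.Icc (-1 : ℝ) 1)
    (Z : Fin 3 → Ω → ℝ × ℝ) (hmeas : ∀ i, Measurable (Z i))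
    (hindep : iIndepFun Z μ)
    (hlaw : ∀ i, μ.map (Z i) = fgmMeasure θ) :
    dCov2 μ Z = θ ^ 2 / 225 := by
  haveI hPM : IsProbabilityMeasure (fgmMeasure θ) := by
    rw [← hlaw 0]; exact Measure.isProbabilityMeasure_map (hmeas 0).aemeasurable
  have hmap01 : μ.map (fun ω => (Z 0 ω, Z 1 ω)) = (fgmMeasure θ).prod (fgmMeasure θ) := by
    rw [(indepFun_iff_map_prod_eq_prod_map_map (hmeas 0).aemeasurable
      (hmeas 1).aemeasurable).mp (hindep.indepFun (show (0:Fin 3) ≠ 1 by decide)),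
      hlaw 0, hlaw 1]
  have hmap12 : μ.map (fun ω => (Z 1 ω, Z 2 ω)) = (fgmMeasure θ).prod (fgmMeasure θ) := by
    rw [(indepFun_iff_map_prod_eq_prod_map_map (hmeas 1).aemeasurable
      (hmeas 2).aemeasurable).mp (hindep.indepFun (show (1:Fin 3) ≠ 2 by decide)),
      hlaw 1, hlaw 2]
  have h012 : IndepFun (Z 0) (fun ω => (Z 1 ω, Z 2 ω)) μ :=
    (hindep.indepFun_prodMk hmeas 1 2 0 (by decide) (by decide)).symm
  have hmap3 : μ.map (fun ω => (Z 0 ω, (Z 1 ω, Z 2 ω)))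
      = (fgmMeasure θ).prod ((fgmMeasure θ).prod (fgmMeasure θ)) := by
    rw [(indepFun_iff_map_prod_eq_prod_map_map (hmeas 0).aemeasurable
      ((hmeas 1).prodMk (hmeas 2)).aemeasurable).mp h012, hlaw 0, hmap12]
  have e1 : (∫ ω, |(Z 0 ω).1 - (Z 1 ω).1| * |(Z 0 ω).2 - (Z 1 ω).2| ∂μ)
      = ∫ z : (ℝ × ℝ) × (ℝ × ℝ), |z.1.1 - z.2.1| * |z.1.2 - z.2.2|
          ∂((fgmMeasure θ).prod (fgmMeasure θ)) := by
    rw [← hmap01, integral_map ((hmeas 0).prodMk (hmeas 1)).aemeasurable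
      (Continuous.aestronglyMeasurable (by fun_prop))]
  have e2a : (∫ ω, |(Z 0 ω).1 - (Z 1 ω).1| ∂μ)
      = ∫ z : (ℝ × ℝ) × (ℝ × ℝ), |z.1.1 - z.2.1| ∂((fgmMeasure θ).prod (fgmMeasure θ)) := by
    rw [← hmap01, integral_map ((hmeas 0).prodMk (hmeas 1)).aemeasurable
      (Continuous.aestronglyMeasurable (by fun_prop))]
  have e2b : (∫ ω, |(Z 0 ω).2 - (Z 1 ω).2| ∂μ)
      = ∫ z : (ℝ × ℝ) × (ℝ × ℝ), |z.1.2 - z.2.2| ∂((fgmMeasure θ).prod (fgmMeasure θ)) := by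
    rw [← hmap01, integral_map ((hmeas 0).prodMk (hmeas 1)).aemeasurable
      (Continuous.aestronglyMeasurable (by fun_prop))]
  have e3 : (∫ ω, |(Z 0 ω).1 - (Z 1 ω).1| * |(Z 0 ω).2 - (Z 2 ω).2| ∂μ)
      = ∫ z : (ℝ × ℝ) × ((ℝ × ℝ) × (ℝ × ℝ)), |z.1.1 - z.2.1.1| * |z.1.2 - z.2.2.2|
          ∂((fgmMeasure θ).prod ((fgmMeasure θ).prod (fgmMeasure θ))) := by
    rw [← hmap3, integral_map ((hmeas 0).prodMk ((hmeas 1).prodMk (hmeas 2))).aemeasurable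
      (Continuous.aestronglyMeasurable (by fun_prop))]
  rw [dCov2, e1, e2a, e2b, e3, term1_eval hθ, term2a_eval hθ, term2b_eval hθ, term3_eval hθ]
  ring
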